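/- For every q ∈ ℂ with |q| < 1, the identity 2·(∑_{n∈ℤ} q^{4n²})² = (∑_{n∈ℤ} q^{2n²})² + (∑_{n∈ℤ} (−1)ⁿ q^{2n²})² holds. (Equivalently, 2·θ₃(q⁸)² = θ₃(q⁴)² + θ₄(q⁴)², the double-argument formula for theta constants.) -/

import Mathlib

/-!
Expanding the squares, `θ₃(q⁴)² + θ₄(q⁴)² = ∑_{m,n} (1 + (-1)^(m+n)) q^(2m² + 2n²)`, so only
pairs with `m + n` even survive, each with weight `2`. These are exactly the pairs
`(a + b, a - b)`, and `2(a + b)² + 2(a - b)² = 4a² + 4b²` turns the sum into `2 θ₃(q⁸)²`.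
-/

lemma zpow_add_of_nonneg₀ {G₀ : Type*} [GroupWithZero G₀] (a : G₀) {m n : ℤ} (hm : 0 ≤ m)
    (hn : 0 ≤ n) : a ^ (m + n) = a ^ m * a ^ n := by
  lift m to ℕ using hm
  lift n to ℕ using hn
  exact_mod_cast pow_add a m n

lemma tsum_comp_add_sub {M : Type*} [AddCommMonoid M] [TopologicalSpace M] (f : ℤ × ℤ → M)
    (hf : ∀ m n, Odd (m + n) → f (m, n) = 0) :
    ∑' p : ℤ × ℤ, f (p.1 + p.2, p.1 - p.2) = ∑' p, f p := by
  have hinj : Function.Injective fun p : ℤ × ℤ => (p.1 + p.2, p.1 - p.2) := by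
    intro p p' h
    simp only [Prod.mk.injEq] at h
    ext <;> omega
  refine hinj.tsum_eq fun ⟨m, n⟩ hmn => ?_
  obtain ⟨a, ha⟩ : Even (m + n) := by
    by_contra hodd
    exact hmn (hf m n (Int.not_even_iff_odd.mp hodd))
  exact ⟨(a, m - a), by simp only [Prod.mk.injEq]; omega⟩

lemma zpow_two_mul_sq_add_mul_sub {G₀ : Type*} [GroupWithZero G₀] (q : G₀) (a b : ℤ) :
    q ^ (2 * (a + b) ^ 2) * q ^ (2 * (a - b) ^ 2) = q ^ (4 * a ^ 2) * q ^ (4 * b ^ 2) := by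
  rw [← zpow_add_of_nonneg₀ q (by positivity) (by positivity),
    ← zpow_add_of_nonneg₀ q (by positivity) (by positivity)]
  ring_nf

lemma zpow_sq_mul_add_neg_one_zpow_mul {K : Type*} [Field K] (q : K) (m n : ℤ) :
    q ^ (2 * m ^ 2) * q ^ (2 * n ^ 2) + (-1) ^ m * q ^ (2 * m ^ 2) * ((-1) ^ n * q ^ (2 * n ^ 2))
      = (1 + (-1) ^ (m + n)) * (q ^ (2 * m ^ 2) * q ^ (2 * n ^ 2)) := by
  rw [zpow_add₀ (neg_ne_zero.mpr one_ne_zero)]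
  ring

lemma summable_norm_zpow_mul_sq {𝕜 : Type*} [NormedField 𝕜] {q : 𝕜} (hq : ‖q‖ < 1) {c : ℤ} (hc : 1 ≤ c) :
    Summable fun n : ℤ => ‖q ^ (c * n ^ 2)‖ := by
  have hgeom : Summable fun n : ℤ => ‖q‖ ^ n.natAbs := by
    apply Summable.of_nat_of_neg <;> simpa using summable_geometric_of_lt_one (norm_nonneg q) hq
  refine hgeom.of_nonneg_of_le (fun _ => norm_nonneg _) fun n => ?_
  have hexp : c * n ^ 2 = ((c * n ^ 2).natAbs : ℤ) := (Int.natAbs_of_nonneg (by positivity)).symm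
  rw [hexp, zpow_natCast, norm_pow]
  refine pow_le_pow_of_le_one (norm_nonneg q) hq.le ?_
  have : (n.natAbs : ℤ) ≤ c * n ^ 2 := by nlinarith [Int.natAbs_le_self_sq n, sq_nonneg n]
  omega

/-- the double-argument formula `2·θ₃(q⁸)² = θ₃(q⁴)² + θ₄(q⁴)²`
written out as `q`-series. -/
theorem theta_double_argument_sum (q : ℂ) (hq : ‖q‖ < 1) :
    2 * (∑' n : ℤ, q ^ (4 * n ^ 2)) ^ 2 =
      (∑' n : ℤ, q ^ (2 * n ^ 2)) ^ 2 + (∑' n : ℤ, (-1 : ℂ) ^ n * q ^ (2 * n ^ 2)) ^ 2 := by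
  have h4 := summable_norm_zpow_mul_sq hq (c := 4) (by norm_num)
  have h2 := summable_norm_zpow_mul_sq hq (c := 2) (by norm_num)
  have h2' : Summable fun n : ℤ => ‖(-1 : ℂ) ^ n * q ^ (2 * n ^ 2)‖ := by
    simpa only [norm_mul, norm_zpow, norm_neg, norm_one, one_zpow, one_mul] using h2
  calc 2 * (∑' n : ℤ, q ^ (4 * n ^ 2)) ^ 2
      = ∑' p : ℤ × ℤ, 2 * (q ^ (4 * p.1 ^ 2) * q ^ (4 * p.2 ^ 2)) := by
        rw [sq, tsum_mul_tsum_of_summable_norm h4 h4, tsum_mul_left]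
    _ = ∑' p : ℤ × ℤ, (1 + (-1) ^ ((p.1 + p.2) + (p.1 - p.2))) *
          (q ^ (2 * (p.1 + p.2) ^ 2) * q ^ (2 * (p.1 - p.2) ^ 2)) := by
        refine tsum_congr fun p => ?_
        rw [zpow_two_mul_sq_add_mul_sub, add_add_sub_cancel, ← two_mul,
          (even_two_mul p.1).neg_one_zpow, one_add_one_eq_two]
    _ = ∑' p : ℤ × ℤ, (1 + (-1) ^ (p.1 + p.2)) * (q ^ (2 * p.1 ^ 2) * q ^ (2 * p.2 ^ 2)) :=
        tsum_comp_add_sub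
          (fun p => (1 + (-1) ^ (p.1 + p.2)) * (q ^ (2 * p.1 ^ 2) * q ^ (2 * p.2 ^ 2)))
          fun m n hodd => by rw [hodd.neg_one_zpow, add_neg_cancel, zero_mul]
    _ = _ := by
        simp only [← zpow_sq_mul_add_neg_one_zpow_mul]
        rw [Summable.tsum_add (summable_mul_of_summable_norm h2 h2)
            (summable_mul_of_summable_norm h2' h2'),
          ← tsum_mul_tsum_of_summable_norm h2 h2, ← tsum_mul_tsum_of_summable_norm h2' h2',
          sq, sq]
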